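/- arXiv:1102.4828 — 3 statements merged into one kernel-verified Lean document; each statement's English description precedes it below -/
import Mathlib

section
/- Let h: [0,∞) → (0,∞) be continuous with h(0) = 1 and h(E) ≤ C(1+E^k) for constants C > 0, k ∈ ℕ. For each δ > 0, the ratio (∫₀^δ E³/(e^{E/T}-1) · h(E) dE) / (∫_δ^∞ E³/(e^{E/T}-1) · h(E) dE) tends to +∞ as T → 0⁺. -/
/-! On `(0, T]` the Planck factor `E³ / (e^{E/T} - 1)` is at least `E³ e⁻¹`, so with `m` the
minimum of `h` on `[0, δ]` the numerator is at least `m e⁻¹ T⁴ / 4`. For `E ≥ δ` and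
`T ≤ min δ (1/2)` we have `e^{-E/T} ≤ e^{-δ/(2T)} e^{-E}`, so together with the polynomial bound
on `h` the denominator is at most `e^{-δ/(2T)}` times a fixed convergent integral. The ratio is
therefore at least a constant times `T⁴ e^{δ/(2T)}`, which tends to `∞`. -/

open MeasureTheory Set Filter Real Topology

section Integral

variable {α : Type*} [MeasurableSpace α] {μ : Measure α} {f g : α → ℝ} {s : Set α}

lemma IntegrableOn.of_continuousOn_of_le [TopologicalSpace α] [OpensMeasurableSpace α]
    (hg : IntegrableOn g s μ) (hs : MeasurableSet s) (hf : ContinuousOn f s)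
    (hf₀ : ∀ x ∈ s, 0 ≤ f x) (hfg : ∀ x ∈ s, f x ≤ g x) : IntegrableOn f s μ :=
  hg.mono' (hf.aestronglyMeasurable hs) <| (ae_restrict_iff' hs).2 <| .of_forall fun x hx ↦ by
    rw [norm_of_nonneg (hf₀ x hx)]
    exact hfg x hx

lemma setIntegral_pos_of_pos (hs : MeasurableSet s) (hμ : μ s ≠ 0) (hf : IntegrableOn f s μ)
    (hpos : ∀ x ∈ s, 0 < f x) : 0 < ∫ x in s, f x ∂μ := by
  rw [setIntegral_pos_iff_support_of_nonneg_ae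
    ((ae_restrict_iff' hs).2 (.of_forall fun x hx ↦ (hpos x hx).le)) hf]
  exact (pos_iff_ne_zero.2 hμ).trans_le (measure_mono fun x hx ↦ ⟨(hpos x hx).ne', hx⟩)

end Integral

lemma integrableOn_pow_mul_exp_neg_Ioi (n : ℕ) :
    IntegrableOn (fun x : ℝ ↦ x ^ n * exp (-x)) (Ioi 0) := by
  refine (GammaIntegral_convergent (s := n + 1) (by positivity)).congr_fun (fun x _ ↦ ?_)
    measurableSet_Ioi
  simp [mul_comm]

lemma tendsto_pow_mul_exp_div_nhdsGT_zero (n : ℕ) {c : ℝ} (hc : 0 < c) :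
    Tendsto (fun T ↦ T ^ n * exp (c / T)) (𝓝[>] 0) atTop := by
  have hu : Tendsto (fun u ↦ exp (c * u) / u ^ n) atTop atTop := by
    refine (((tendsto_exp_div_pow_atTop n).comp (tendsto_id.const_mul_atTop hc)).const_mul_atTop
      (pow_pos hc n)).congr' ?_
    filter_upwards [eventually_ne_atTop 0] with u hu
    simp only [Function.comp, id, mul_pow]
    field_simp
  refine (hu.comp tendsto_inv_nhdsGT_zero).congr' ?_
  filter_upwards [self_mem_nhdsWithin] with T (hT : 0 < T)
  simp only [Function.comp, inv_pow, div_eq_mul_inv c]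
  field_simp

lemma inv_exp_sub_one_le_two_mul_exp_neg {x : ℝ} (hx : 2 ≤ exp x) :
    (exp x - 1)⁻¹ ≤ 2 * exp (-x) := by
  rw [exp_neg, ← div_eq_mul_inv]
  exact inv_le_of_inv_le₀ (by positivity) (by rw [inv_div]; linarith)

noncomputable def planckDensity (T E : ℝ) : ℝ := E ^ 3 / (exp (E / T) - 1)

section planckDensity

variable {T E : ℝ}

lemma exp_div_sub_one_pos (hT : 0 < T) (hE : 0 < E) : 0 < exp (E / T) - 1 :=
  sub_pos.2 (one_lt_exp_iff.2 (div_pos hE hT))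

lemma planckDensity_pos (hT : 0 < T) (hE : 0 < E) : 0 < planckDensity T E :=
  div_pos (pow_pos hE 3) (exp_div_sub_one_pos hT hE)

lemma continuousOn_planckDensity (hT : 0 < T) : ContinuousOn (planckDensity T) (Ioi 0) :=
  (continuous_pow 3).continuousOn.div (by fun_prop) fun _ hE ↦ (exp_div_sub_one_pos hT hE).ne'

lemma planckDensity_le_mul_sq (hT : 0 < T) (hE : 0 < E) : planckDensity T E ≤ T * E ^ 2 := by
  calc planckDensity T E ≤ E ^ 3 / (E / T) :=
        div_le_div_of_nonneg_left (by positivity) (by positivity)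
          (by linarith [add_one_le_exp (E / T)])
    _ = T * E ^ 2 := by field_simp

lemma pow_mul_exp_neg_le_planckDensity (hT : 0 < T) (hE : 0 < E) :
    E ^ 3 * exp (-(E / T)) ≤ planckDensity T E := by
  rw [exp_neg, ← div_eq_mul_inv]
  exact div_le_div_of_nonneg_left (by positivity) (exp_div_sub_one_pos hT hE) (by linarith)

lemma planckDensity_le_exp_neg_mul {δ : ℝ} (hT : 0 < T) (hT₁ : 2 * T ≤ 1) (hTδ : T ≤ δ)
    (hδE : δ ≤ E) : planckDensity T E ≤ exp (-(δ / 2 / T)) * (2 * E ^ 3 * exp (-E)) := by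
  have hE : 0 < E := hT.trans_le (hTδ.trans hδE)
  have hexp : 2 ≤ exp (E / T) := by
    linarith [add_one_le_exp (E / T), (one_le_div hT).2 (hTδ.trans hδE)]
  -- one half of `E / T` is at least `δ / (2T)`, the other at least `E` because `2T ≤ 1`
  have hsplit : exp (-(E / T)) ≤ exp (-(δ / 2 / T)) * exp (-E) := by
    rw [← exp_add, exp_le_exp]
    have : E ≤ E / (2 * T) := (le_div_iff₀ (by positivity)).2 (by nlinarith)
    have : δ / 2 / T ≤ E / (2 * T) := by rw [div_div]; gcongr
    have : E / T = E / (2 * T) + E / (2 * T) := by field_simp; ring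
    linarith
  calc planckDensity T E = E ^ 3 * (exp (E / T) - 1)⁻¹ := div_eq_mul_inv _ _
    _ ≤ E ^ 3 * (2 * (exp (-(δ / 2 / T)) * exp (-E))) := by
        gcongr
        exact (inv_exp_sub_one_le_two_mul_exp_neg hexp).trans (by gcongr)
    _ = exp (-(δ / 2 / T)) * (2 * E ^ 3 * exp (-E)) := by ring

end planckDensity

noncomputable def tailMajorant (C : ℝ) (k : ℕ) (E : ℝ) : ℝ :=
  2 * E ^ 3 * exp (-E) * (C * (1 + E ^ k))

lemma integrableOn_tailMajorant (C : ℝ) (k : ℕ) : IntegrableOn (tailMajorant C k) (Ioi 0) :=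
  IntegrableOn.congr_fun (((integrableOn_pow_mul_exp_neg_Ioi 3).add
    (integrableOn_pow_mul_exp_neg_Ioi (3 + k))).const_mul (2 * C))
    (fun E _ ↦ by simp only [tailMajorant, Pi.add_apply]; ring) measurableSet_Ioi

section ThermalIntegrals

variable {h : ℝ → ℝ} {C : ℝ} {k : ℕ} {δ T : ℝ}

lemma integrableOn_planckDensity_mul_Ioc (hT : 0 < T) (hc : ContinuousOn h (Ici 0))
    (h₀ : ∀ E, 0 ≤ E → 0 ≤ h E) (hbound : ∀ E, 0 ≤ E → h E ≤ C * (1 + E ^ k)) :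
    IntegrableOn (fun E ↦ planckDensity T E * h E) (Ioc 0 δ) :=
  IntegrableOn.of_continuousOn_of_le (g := fun E ↦ T * E ^ 2 * (C * (1 + E ^ k)))
    (Continuous.integrableOn_Ioc (by fun_prop)) measurableSet_Ioc
    (((continuousOn_planckDensity hT).mono Ioc_subset_Ioi_self).mul
      (hc.mono (Ioc_subset_Ioi_self.trans Ioi_subset_Ici_self)))
    (fun E hE ↦ mul_nonneg (planckDensity_pos hT hE.1).le (h₀ E hE.1.le))
    (fun E hE ↦ mul_le_mul (planckDensity_le_mul_sq hT hE.1) (hbound E hE.1.le) (h₀ E hE.1.le)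
      (by positivity))

lemma pow_four_le_integral_planckDensity_mul_Ioc (hT : 0 < T) (hTδ : T ≤ δ)
    (hint : IntegrableOn (fun E ↦ planckDensity T E * h E) (Ioc 0 δ)) {m : ℝ} (hm : 0 ≤ m)
    (hmin : ∀ E ∈ Ioc 0 δ, m ≤ h E) :
    m * exp (-1) / 4 * T ^ 4 ≤ ∫ E in Ioc 0 δ, planckDensity T E * h E := by
  have hsub : Ioc 0 T ⊆ Ioc 0 δ := Ioc_subset_Ioc_right hTδ
  have hpointwise : ∀ E ∈ Ioc 0 T, m * exp (-1) * E ^ 3 ≤ planckDensity T E * h E := by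
    rintro E ⟨hE, hET⟩
    calc m * exp (-1) * E ^ 3 ≤ E ^ 3 * exp (-(E / T)) * h E := by
          rw [mul_comm m, mul_comm, ← mul_assoc]
          gcongr
          · exact (div_le_one hT).2 hET
          · exact hmin E (hsub ⟨hE, hET⟩)
      _ ≤ planckDensity T E * h E :=
          mul_le_mul_of_nonneg_right (pow_mul_exp_neg_le_planckDensity hT hE)
            (hm.trans (hmin E (hsub ⟨hE, hET⟩)))
  calc m * exp (-1) / 4 * T ^ 4 = ∫ E in Ioc 0 T, m * exp (-1) * E ^ 3 := by
        rw [integral_const_mul, ← intervalIntegral.integral_of_le hT.le, integral_pow]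
        ring
    _ ≤ ∫ E in Ioc 0 T, planckDensity T E * h E :=
        setIntegral_mono_on (continuous_const.mul (continuous_pow 3)).integrableOn_Ioc
          (hint.mono_set hsub) measurableSet_Ioc hpointwise
    _ ≤ ∫ E in Ioc 0 δ, planckDensity T E * h E :=
        setIntegral_mono_set hint ((ae_restrict_iff' measurableSet_Ioc).2 (.of_forall fun E hE ↦
          mul_nonneg (planckDensity_pos hT hE.1).le (hm.trans (hmin E hE))))
          hsub.eventuallyLE

variable (hT : 0 < T) (hT₁ : 2 * T ≤ 1) (hTδ : T ≤ δ)
  (h₀ : ∀ E, 0 ≤ E → 0 ≤ h E) (hbound : ∀ E, 0 ≤ E → h E ≤ C * (1 + E ^ k))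
include hT hT₁ hTδ h₀ hbound

lemma planckDensity_mul_le_tailMajorant {E : ℝ} (hE : δ ≤ E) :
    planckDensity T E * h E ≤ exp (-(δ / 2 / T)) * tailMajorant C k E := by
  have hE₀ : 0 ≤ E := hT.le.trans (hTδ.trans hE)
  calc planckDensity T E * h E
      ≤ exp (-(δ / 2 / T)) * (2 * E ^ 3 * exp (-E)) * (C * (1 + E ^ k)) :=
        mul_le_mul (planckDensity_le_exp_neg_mul hT hT₁ hTδ hE) (hbound E hE₀) (h₀ E hE₀)
          (by positivity)
    _ = exp (-(δ / 2 / T)) * tailMajorant C k E := by rw [tailMajorant]; ring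

lemma integrableOn_planckDensity_mul_Ioi (hc : ContinuousOn h (Ici 0)) :
    IntegrableOn (fun E ↦ planckDensity T E * h E) (Ioi δ) := by
  have hsub : Ioi δ ⊆ Ioi 0 := Ioi_subset_Ioi (hT.le.trans hTδ)
  exact IntegrableOn.of_continuousOn_of_le
    (((integrableOn_tailMajorant C k).mono_set hsub).const_mul _) measurableSet_Ioi
    (((continuousOn_planckDensity hT).mono hsub).mul (hc.mono (hsub.trans Ioi_subset_Ici_self)))
    (fun E hE ↦ mul_nonneg (planckDensity_pos hT (hsub hE)).le (h₀ E (le_of_lt (hsub hE))))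
    (fun _ hE ↦ planckDensity_mul_le_tailMajorant hT hT₁ hTδ h₀ hbound hE.le)

lemma integral_planckDensity_mul_Ioi_le (hc : ContinuousOn h (Ici 0)) :
    ∫ E in Ioi δ, planckDensity T E * h E ≤
      exp (-(δ / 2 / T)) * ∫ E in Ioi δ, tailMajorant C k E := by
  rw [← integral_const_mul]
  exact setIntegral_mono_on (integrableOn_planckDensity_mul_Ioi hT hT₁ hTδ h₀ hbound hc)
    (((integrableOn_tailMajorant C k).mono_set (Ioi_subset_Ioi (hT.le.trans hTδ))).const_mul _)
    measurableSet_Ioi fun E hE ↦ planckDensity_mul_le_tailMajorant hT hT₁ hTδ h₀ hbound hE.le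

end ThermalIntegrals

theorem stmt9_general (h : ℝ → ℝ) (C : ℝ) (k : ℕ) (δ : ℝ)
    (hc : ContinuousOn h (Set.Ici 0)) (hpos : ∀ E : ℝ, 0 ≤ E → 0 < h E)
    (hbound : ∀ E : ℝ, 0 ≤ E → h E ≤ C * (1 + E ^ k)) (hδ : 0 < δ) :
    Filter.Tendsto
      (fun T : ℝ =>
        (∫ E in Set.Ioc (0:ℝ) δ, E ^ 3 / (Real.exp (E / T) - 1) * h E) /
        (∫ E in Set.Ioi δ, E ^ 3 / (Real.exp (E / T) - 1) * h E))
      (nhdsWithin 0 (Set.Ioi 0)) Filter.atTop := by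
  change Tendsto (fun T ↦ (∫ E in Ioc 0 δ, planckDensity T E * h E) /
    ∫ E in Ioi δ, planckDensity T E * h E) (𝓝[>] 0) atTop
  have h₀ : ∀ E, 0 ≤ E → 0 ≤ h E := fun E hE ↦ (hpos E hE).le
  obtain ⟨E₀, hE₀, hmin⟩ := isCompact_Icc.exists_isMinOn (nonempty_Icc.2 hδ.le)
    (hc.mono Icc_subset_Ici_self)
  have hm : 0 < h E₀ := hpos E₀ hE₀.1
  set A := h E₀ * exp (-1) / 4
  set K := ∫ E in Ioi δ, tailMajorant C k E
  have hbounds : ∀ᶠ T in 𝓝[>] 0, A * T ^ 4 ≤ ∫ E in Ioc 0 δ, planckDensity T E * h E ∧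
      0 < ∫ E in Ioi δ, planckDensity T E * h E ∧
      ∫ E in Ioi δ, planckDensity T E * h E ≤ exp (-(δ / 2 / T)) * K := by
    filter_upwards [Ioo_mem_nhdsGT (lt_min hδ one_half_pos)] with T ⟨hT, hTmin⟩
    obtain ⟨hTδ, hThalf⟩ := lt_min_iff.1 hTmin
    have hT₁ : 2 * T ≤ 1 := by linarith
    have hint := integrableOn_planckDensity_mul_Ioi hT hT₁ hTδ.le h₀ hbound hc
    refine ⟨pow_four_le_integral_planckDensity_mul_Ioc hT hTδ.le
        (integrableOn_planckDensity_mul_Ioc hT hc h₀ hbound) hm.le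
        fun E hE ↦ hmin (Ioc_subset_Icc_self hE),
      setIntegral_pos_of_pos measurableSet_Ioi (by simp) hint fun E hE ↦
        mul_pos (planckDensity_pos hT (hδ.trans hE)) (hpos E (hδ.trans hE).le),
      integral_planckDensity_mul_Ioi_le hT hT₁ hTδ.le h₀ hbound hc⟩
  have hK : 0 < K := by
    obtain ⟨T, -, hden, hle⟩ := hbounds.exists
    exact pos_of_mul_pos_right (hden.trans_le hle) (exp_pos _).le
  refine tendsto_atTop_mono' _ ?_ <|
    (tendsto_pow_mul_exp_div_nhdsGT_zero 4 (half_pos hδ)).const_mul_atTop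
      (div_pos (by positivity : 0 < A) hK)
  filter_upwards [hbounds, self_mem_nhdsWithin] with T ⟨hnum, hden, hle⟩ (hT : 0 < T)
  calc A / K * (T ^ 4 * exp (δ / 2 / T)) = A * T ^ 4 / (exp (-(δ / 2 / T)) * K) := by
        rw [exp_neg]; field_simp
    _ ≤ _ := div_le_div₀ ((by positivity : 0 ≤ A * T ^ 4).trans hnum) hnum hden hle

theorem stmt9 (h : ℝ → ℝ) (C : ℝ) (k : ℕ) (δ : ℝ)
    (hc : ContinuousOn h (Set.Ici 0)) (hpos : ∀ E : ℝ, 0 ≤ E → 0 < h E)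
    (hone : h 0 = 1) (hC : 0 < C)
    (hbound : ∀ E : ℝ, 0 ≤ E → h E ≤ C * (1 + E ^ k)) (hδ : 0 < δ) :
    Filter.Tendsto
      (fun T : ℝ =>
        (∫ E in Set.Ioc (0:ℝ) δ, E ^ 3 / (Real.exp (E / T) - 1) * h E) /
        (∫ E in Set.Ioi δ, E ^ 3 / (Real.exp (E / T) - 1) * h E))
      (nhdsWithin 0 (Set.Ioi 0)) Filter.atTop :=
  stmt9_general h C k δ hc hpos hbound hδ
end

section
/- Let β(E,T) = (1/π²) E³/(e^{E/T}-1) f(E)^{-3} with f > 0 continuous, and fix E₀ > 0. Define p(T) = (1/3)[∫₀^{E₀} β dE − ∫_{E₀}^∞ β dE] (assumed finite). If p(T) < 0, then dp/dT ≤ (E₀ e^{E₀/T}/(e^{E₀/T}-1)) · p(T)/T² < 0. -/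
open MeasureTheory

lemma mono_aux {a b : ℝ} (ha : 0 < a) (hab : a ≤ b) :
    a * Real.exp a / (Real.exp a - 1) ≤ b * Real.exp b / (Real.exp b - 1) := by
  have hb : 0 < b := ha.trans_le hab
  have hA : 0 < Real.exp a - 1 := by
    have := Real.add_one_le_exp a; linarith
  have hB : 0 < Real.exp b - 1 := by
    have := Real.add_one_le_exp b; linarith
  rw [div_le_div_iff₀ hA hB]
  set s := b - a with hs
  have hbs : b = a + s := by ring
  have hexp : Real.exp b = Real.exp a * Real.exp s := by
    rw [hbs, Real.exp_add]
  have h3 : a + 1 ≤ Real.exp a := Real.add_one_le_exp a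
  have hs0 : 0 ≤ s := by linarith
  have h4 : Real.exp s - 1 ≤ s * Real.exp s := by
    have h5 : -s + 1 ≤ Real.exp (-s) := Real.add_one_le_exp (-s)
    have h6 : Real.exp s * Real.exp (-s) = 1 := by
      rw [← Real.exp_add]; simp
    nlinarith [Real.exp_pos s]
  have key : a * (Real.exp s - 1) ≤ s * Real.exp s * (Real.exp a - 1) := by
    calc a * (Real.exp s - 1) ≤ a * (s * Real.exp s) :=
          mul_le_mul_of_nonneg_left h4 ha.le
      _ ≤ (Real.exp a - 1) * (s * Real.exp s) := by
          apply mul_le_mul_of_nonneg_right (by linarith)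
          positivity
      _ = s * Real.exp s * (Real.exp a - 1) := by ring
  have final := mul_le_mul_of_nonneg_left key (Real.exp_pos a).le
  rw [hexp, hbs]
  nlinarith [final]

lemma theta_mono {T E E₀ : ℝ} (hT : 0 < T) (hE : 0 < E) (hEE : E ≤ E₀) :
    E * Real.exp (E / T) / ((Real.exp (E / T) - 1) * T ^ 2) ≤
      E₀ * Real.exp (E₀ / T) / ((Real.exp (E₀ / T) - 1) * T ^ 2) := by
  have ha : 0 < E / T := div_pos hE hT
  have hab : E / T ≤ E₀ / T := by gcongr
  have h := mono_aux ha hab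
  have hexE : 0 < Real.exp (E / T) - 1 := by
    have := Real.add_one_le_exp (E / T); linarith
  have hexE0 : 0 < Real.exp (E₀ / T) - 1 := by
    have : (0:ℝ) < E₀ / T := ha.trans_le hab
    have := Real.add_one_le_exp (E₀ / T); linarith
  have e1 : E * Real.exp (E / T) / ((Real.exp (E / T) - 1) * T ^ 2)
      = (E / T * Real.exp (E / T) / (Real.exp (E / T) - 1)) / T := by
    field_simp [hT.ne', hexE.ne']
  have e2 : E₀ * Real.exp (E₀ / T) / ((Real.exp (E₀ / T) - 1) * T ^ 2)
      = (E₀ / T * Real.exp (E₀ / T) / (Real.exp (E₀ / T) - 1)) / T := by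
    field_simp [hT.ne', hexE0.ne']; try ring
    try simp
  rw [e1, e2]
  gcongr

theorem stmt12 (f : ℝ → ℝ) (E₀ : ℝ) (hE₀ : 0 < E₀)
    (hfc : ContinuousOn f (Set.Ici 0)) (hfpos : ∀ E : ℝ, 0 ≤ E → 0 < f E)
    (β : ℝ → ℝ → ℝ)
    (hβ : ∀ E T : ℝ, β E T = (1 / Real.pi ^ 2) * (E ^ 3 / (Real.exp (E / T) - 1)) / f E ^ 3)
    (p : ℝ → ℝ)
    (hp : ∀ T : ℝ, p T =
      (1 / 3) * ((∫ E in Set.Ioc (0:ℝ) E₀, β E T) - ∫ E in Set.Ioi E₀, β E T))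
    (hfin : ∀ T : ℝ, 0 < T → IntegrableOn (fun E => β E T) (Set.Ioi 0))
    (hintθ : ∀ T : ℝ, 0 < T →
      IntegrableOn
        (fun E => E * Real.exp (E / T) / ((Real.exp (E / T) - 1) * T ^ 2) * β E T)
        (Set.Ioi 0))
    (hd : ∀ T : ℝ, 0 < T →
      HasDerivAt p
        ((1 / 3) *
          ((∫ E in Set.Ioc (0:ℝ) E₀,
              E * Real.exp (E / T) / ((Real.exp (E / T) - 1) * T ^ 2) * β E T) -
            ∫ E in Set.Ioi E₀,
              E * Real.exp (E / T) / ((Real.exp (E / T) - 1) * T ^ 2) * β E T)) T) :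
    ∀ T : ℝ, 0 < T → p T < 0 →
      deriv p T ≤ E₀ * Real.exp (E₀ / T) / (Real.exp (E₀ / T) - 1) * (p T / T ^ 2) ∧
      deriv p T < 0 := by
  intro T hT hpT
  have hderiv := (hd T hT).deriv
  set θ : ℝ → ℝ := fun E => E * Real.exp (E / T) / ((Real.exp (E / T) - 1) * T ^ 2) with hθdef
  have hex : 0 < Real.exp (E₀ / T) - 1 := by
    have : (0:ℝ) < E₀ / T := div_pos hE₀ hT
    have := Real.add_one_le_exp (E₀ / T); linarith
  have hC : 0 < θ E₀ := by
    simp only [hθdef]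
    positivity
  -- β nonneg
  have hβnn : ∀ E : ℝ, 0 < E → 0 ≤ β E T := by
    intro E hE
    rw [hβ]
    have hexE : 0 < Real.exp (E / T) - 1 := by
      have : (0:ℝ) < E / T := div_pos hE hT
      have := Real.add_one_le_exp (E / T); linarith
    have hf := hfpos E hE.le
    positivity
  -- integrability
  have hmeas1 : MeasurableSet (Set.Ioc (0:ℝ) E₀) := measurableSet_Ioc
  have hmeas2 : MeasurableSet (Set.Ioi E₀) := measurableSet_Ioi
  have hsub1 : Set.Ioc (0:ℝ) E₀ ⊆ Set.Ioi 0 := Set.Ioc_subset_Ioi_self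
  have hsub2 : Set.Ioi E₀ ⊆ Set.Ioi (0:ℝ) := Set.Ioi_subset_Ioi hE₀.le
  have hintθ1 : IntegrableOn (fun E => θ E * β E T) (Set.Ioc 0 E₀) :=
    (hintθ T hT).mono_set hsub1
  have hintθ2 : IntegrableOn (fun E => θ E * β E T) (Set.Ioi E₀) :=
    (hintθ T hT).mono_set hsub2
  have hintβ1 : IntegrableOn (fun E => β E T) (Set.Ioc 0 E₀) :=
    (hfin T hT).mono_set hsub1
  have hintβ2 : IntegrableOn (fun E => β E T) (Set.Ioi E₀) :=
    (hfin T hT).mono_set hsub2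
  -- integral bounds
  have hI1 : (∫ E in Set.Ioc (0:ℝ) E₀, θ E * β E T) ≤
      ∫ E in Set.Ioc (0:ℝ) E₀, θ E₀ * β E T := by
    apply setIntegral_mono_on hintθ1 (hintβ1.const_mul _) hmeas1
    intro E hE
    exact mul_le_mul_of_nonneg_right (theta_mono hT hE.1 hE.2) (hβnn E hE.1)
  have hI2 : (∫ E in Set.Ioi E₀, θ E₀ * β E T) ≤
      ∫ E in Set.Ioi E₀, θ E * β E T := by
    apply setIntegral_mono_on (hintβ2.const_mul _) hintθ2 hmeas2
    intro E hE
    exact mul_le_mul_of_nonneg_right (theta_mono hT hE₀ (le_of_lt hE)) (hβnn E (hE₀.trans hE))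
  rw [integral_const_mul] at hI1 hI2
  have hbound : deriv p T ≤ θ E₀ * p T := by
    rw [hderiv, hp T]
    have : θ E₀ * ((1:ℝ)/3 * ((∫ E in Set.Ioc (0:ℝ) E₀, β E T) - ∫ E in Set.Ioi E₀, β E T))
        = (1/3) * (θ E₀ * (∫ E in Set.Ioc (0:ℝ) E₀, β E T)
            - θ E₀ * ∫ E in Set.Ioi E₀, β E T) := by ring
    rw [this]
    have h13 : (0:ℝ) ≤ 1/3 := by norm_num
    apply mul_le_mul_of_nonneg_left _ h13
    exact sub_le_sub hI1 hI2
  have heq : θ E₀ * p T = E₀ * Real.exp (E₀ / T) / (Real.exp (E₀ / T) - 1) * (p T / T ^ 2) := by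
    simp only [hθdef]
    field_simp
  constructor
  · rw [← heq]; exact hbound
  · exact lt_of_le_of_lt hbound (mul_neg_of_pos_of_neg hC hpT)
end

section
/- Let f(E) = f(ξ)·exp(∫_ξ^E (1−g(x))/x dx) where |g(E)| < ε for E ≥ ξ, with 0 < ε < 1/3. Then ∫_ξ^∞ E²/f(E)³ dE ≥ ξ³/(f(ξ)³ · 3ε') for the bound f(E) ≤ f(ξ)(E/ξ)^{1+ε}, i.e., ∫_ξ^∞ E²/f³ dE ≥ (1/(3ε)) · ξ³/f(ξ)³. -/
open MeasureTheory

theorem stmt16 (f g : ℝ → ℝ) (ξ ε : ℝ) (hξ : 0 < ξ)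
    (hε : 0 < ε) (hε' : ε < 1 / 3) (hfξ : 0 < f ξ)
    (hf : ∀ E : ℝ, ξ ≤ E → f E = f ξ * Real.exp (∫ x in ξ..E, (1 - g x) / x))
    (hg : ∀ E : ℝ, ξ ≤ E → |g E| < ε) :
    ENNReal.ofReal (ξ ^ 3 / (f ξ ^ 3 * (3 * ε))) ≤
      ∫⁻ E in Set.Ioi ξ, ENNReal.ofReal (E ^ 2 / f E ^ 3) := by
  have h3ε : (0:ℝ) < 3 * ε := by linarith
  have hfpos : ∀ E, ξ ≤ E → 0 < f E := by
    intro E hE; rw [hf E hE]; positivity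
  -- f E ≤ f ξ * (E/ξ)^(1+ε)
  have hbound : ∀ E, ξ ≤ E → f E ≤ f ξ * (E / ξ) ^ (1 + ε) := by
    intro E hE
    have hEpos : 0 < E := lt_of_lt_of_le hξ hE
    have hdiv : 1 ≤ E / ξ := (one_le_div hξ).2 hE
    have hlog : 0 ≤ Real.log (E / ξ) := Real.log_nonneg hdiv
    have hrpow : (E / ξ) ^ (1 + ε) = Real.exp ((1 + ε) * Real.log (E / ξ)) := by
      rw [Real.rpow_def_of_pos (by positivity), mul_comm]
    rw [hf E hE, hrpow]
    refine mul_le_mul_of_nonneg_left ?_ hfξ.le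
    rw [Real.exp_le_exp]
    have h0 : (0:ℝ) ∉ Set.uIcc ξ E := by
      rw [Set.uIcc_of_le hE]
      intro h0; exact absurd (Set.mem_Icc.1 h0).1 (by linarith)
    have hI2 : IntervalIntegrable (fun x => (1 + ε) / x) volume ξ E := by
      apply ContinuousOn.intervalIntegrable
      exact continuousOn_const.div continuousOn_id fun x hx => by
        rw [Set.uIcc_of_le hE] at hx
        exact ne_of_gt (lt_of_lt_of_le hξ (Set.mem_Icc.1 hx).1)
    have hval : (∫ x in ξ..E, (1 + ε) / x) = (1 + ε) * Real.log (E / ξ) := by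
      have : (fun x : ℝ => (1 + ε) / x) = fun x => (1 + ε) * (1 / x) := by
        funext x; rw [mul_one_div]
      rw [this, intervalIntegral.integral_const_mul, integral_one_div h0]
    by_cases hI : IntervalIntegrable (fun x => (1 - g x) / x) volume ξ E
    · rw [← hval]
      apply intervalIntegral.integral_mono_on hE hI hI2
      intro x hx
      have hx1 : ξ ≤ x := (Set.mem_Icc.1 hx).1
      have hxpos : 0 < x := lt_of_lt_of_le hξ hx1
      have h := (abs_lt.1 (hg x hx1)).1
      gcongr <;> linarith
    · rw [intervalIntegral.integral_undef hI]
      exact mul_nonneg (by linarith) hlog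
  -- pointwise lower bound on the integrand
  have hpt : ∀ x ∈ Set.Ioi ξ,
      ENNReal.ofReal (ξ ^ ((3:ℝ) + 3 * ε) / f ξ ^ 3 * x ^ (-(1 + 3 * ε))) ≤
        ENNReal.ofReal (x ^ 2 / f x ^ 3) := by
    intro x hx
    have hx1 : ξ ≤ x := le_of_lt hx
    have hxpos : 0 < x := lt_of_lt_of_le hξ hx1
    apply ENNReal.ofReal_le_ofReal
    have hfx : 0 < f x := hfpos x hx1
    have hfb : f x ≤ f ξ * (x / ξ) ^ (1 + ε) := hbound x hx1
    have hfb3 : f x ^ 3 ≤ (f ξ * (x / ξ) ^ (1 + ε)) ^ 3 :=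
      pow_le_pow_left₀ hfx.le hfb 3
    have hden_pos : 0 < (f ξ * (x / ξ) ^ (1 + ε)) ^ 3 := by positivity
    calc ξ ^ ((3:ℝ) + 3 * ε) / f ξ ^ 3 * x ^ (-(1 + 3 * ε))
        = x ^ 2 / (f ξ * (x / ξ) ^ (1 + ε)) ^ 3 := by
          rw [mul_pow, ← Real.rpow_natCast ((x / ξ) ^ (1 + ε)) 3,
            ← Real.rpow_mul (by positivity), Real.div_rpow hxpos.le hξ.le,
            show (1 + ε) * ((3:ℕ):ℝ) = 3 + 3 * ε by push_cast; ring,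
            Real.rpow_neg hxpos.le]
          have h1 : x ^ ((3:ℝ) + 3 * ε) = x ^ (2:ℕ) * x ^ (1 + 3 * ε) := by
            rw [← Real.rpow_natCast x 2, ← Real.rpow_add hxpos]
            push_cast
            congr 1
            ring
          have h2 : (0:ℝ) < x ^ ((3:ℝ) + 3 * ε) := Real.rpow_pos_of_pos hxpos _
          have h3 : (0:ℝ) < ξ ^ ((3:ℝ) + 3 * ε) := Real.rpow_pos_of_pos hξ _
          have h4 : (0:ℝ) < x ^ ((1:ℝ) + 3 * ε) := Real.rpow_pos_of_pos hxpos _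
          rw [h1]
          field_simp
      _ ≤ x ^ 2 / f x ^ 3 := by
          apply div_le_div_of_nonneg_left (by positivity) (by positivity) hfb3
  -- compute the lower integral
  have hs : -(1 + 3 * ε) < -1 := by linarith
  set c : ℝ := ξ ^ ((3:ℝ) + 3 * ε) / f ξ ^ 3 with hc
  have hcpos : 0 < c := by positivity
  have hInt : IntegrableOn (fun x : ℝ => c * x ^ (-(1 + 3 * ε))) (Set.Ioi ξ) :=
    (integrableOn_Ioi_rpow_of_lt hs hξ).const_mul c
  have hval : (∫ x in Set.Ioi ξ, c * x ^ (-(1 + 3 * ε))) =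
      ξ ^ 3 / (f ξ ^ 3 * (3 * ε)) := by
    rw [integral_const_mul, integral_Ioi_rpow_of_lt hs hξ]
    have h1 : -(1 + 3 * ε) + 1 = -(3 * ε) := by ring
    rw [h1, hc]
    have key : ξ ^ ((3:ℝ) + 3 * ε) * ξ ^ (-(3 * ε)) = ξ ^ (3:ℕ) := by
      rw [← Real.rpow_add hξ, ← Real.rpow_natCast ξ 3]; norm_num
    rw [div_mul_eq_mul_div, neg_div_neg_eq, ← mul_div_assoc, key, div_div]
    ring
  calc ENNReal.ofReal (ξ ^ 3 / (f ξ ^ 3 * (3 * ε)))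
      = ∫⁻ x in Set.Ioi ξ, ENNReal.ofReal (c * x ^ (-(1 + 3 * ε))) := by
        rw [← hval]
        apply ofReal_integral_eq_lintegral_ofReal hInt
        filter_upwards [ae_restrict_mem measurableSet_Ioi] with x hx
        have hxpos : 0 < x := lt_of_le_of_lt hξ.le hx
        positivity
    _ ≤ ∫⁻ x in Set.Ioi ξ, ENNReal.ofReal (x ^ 2 / f x ^ 3) :=
        lintegral_mono_ae <| by
          filter_upwards [ae_restrict_mem measurableSet_Ioi] with x hx
          exact hpt x hx
end
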